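/- Let Λ be a coherent frame, and equip the set Sp(Λ) of prime elements of Λ with the Stone topology, whose open sets are the sets U(a) = {p ∈ Sp(Λ) | ¬ a ≤ p} for a ∈ Λ. Then a subset of Sp(Λ) is quasi-compact and open if and only if it equals U(c) for some compact element c ∈ Λ. In particular, since ⊤ is compact, the space Sp(Λ) is quasi-compact. -/

import Mathlib

open CompleteLattice

/-- An element `p` of a lattice with top is prime if `p ≠ ⊤` and
`x ⊓ y ≤ p` implies `x ≤ p` or `y ≤ p`. -/
def IsPrimeElem {Λ : Type*} [Lattice Λ] [OrderTop Λ] (p : Λ) : Prop :=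
  p ≠ ⊤ ∧ ∀ x y : Λ, x ⊓ y ≤ p → x ≤ p ∨ y ≤ p

/-- The set of prime elements of a frame. -/
abbrev Sp (Λ : Type*) [Order.Frame Λ] := {p : Λ // IsPrimeElem p}

/-- The basic open subset of the spectrum associated to an element of the frame. -/
def U {Λ : Type*} [Order.Frame Λ] (a : Λ) : Set (Sp Λ) := {p : Sp Λ | ¬ a ≤ (p : Λ)}

/-- The Stone topology on the spectrum of a frame. -/
instance (Λ : Type*) [Order.Frame Λ] : TopologicalSpace (Sp Λ) :=
  TopologicalSpace.generateFrom (Set.range (U (Λ := Λ)))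

/-! Since `U` sends `⊤`, finite meets and arbitrary joins to `univ`, intersections and unions,
the opens of `Sp Λ` are exactly the sets `U a`. A compact `c` not below `b` is kept away from `b`
by a prime: Zorn gives a maximal element above `b` not above `c`, and distributivity makes it
prime. Hence `U c ⊆ U b` forces `c ≤ b`, so a cover of `U c` is a join above `c`, which compactness
of `c` reduces to a finite one. Conversely, by compact generation `U a` is covered by the `U d` with
`d ≤ a` compact, and a finite subcover gives `U a = U (d₁ ⊔ ⋯ ⊔ dₙ)`. -/

theorem isPrimeElem_of_maximal_not_ge {Λ : Type*} [DistribLattice Λ] [OrderTop Λ] {c m : Λ}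
    (hm : Maximal (fun q => ¬ c ≤ q) m) : IsPrimeElem m := by
  have hc_le_sup : ∀ x, ¬ x ≤ m → c ≤ m ⊔ x := fun x hx => by
    by_contra hcx
    exact hx (le_sup_right.trans (hm.2 hcx le_sup_left))
  refine ⟨fun htop => hm.1 (htop ▸ le_top), fun x y hxy => ?_⟩
  by_contra! ⟨hx, hy⟩
  apply hm.1
  calc c ≤ (m ⊔ x) ⊓ (m ⊔ y) := le_inf (hc_le_sup x hx) (hc_le_sup y hy)
    _ = m ⊔ x ⊓ y := sup_inf_left m x y |>.symm
    _ ≤ m := sup_le le_rfl hxy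

theorem IsCompactElement.exists_maximal_not_ge {Λ : Type*} [CompleteLattice Λ] {c b : Λ}
    (hc : IsCompactElement c) (hcb : ¬ c ≤ b) :
    ∃ m, b ≤ m ∧ Maximal (fun q => ¬ c ≤ q) m := by
  refine zorn_le_nonempty₀ {q | ¬ c ≤ q} (fun C hC hchain y hy => ?_) b hcb
  refine ⟨sSup C, fun hcC => ?_, fun z hz => le_sSup hz⟩
  rw [isCompactElement_iff_le_of_directed_sSup_le] at hc
  obtain ⟨z, hzC, hcz⟩ := hc C ⟨y, hy⟩ hchain.directedOn hcC
  exact hC hzC hcz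

section Spectrum

variable {Λ : Type*} [Order.Frame Λ]

theorem IsCompactElement.exists_prime_ge_not_ge {c b : Λ} (hc : IsCompactElement c)
    (hcb : ¬ c ≤ b) : ∃ p : Sp Λ, b ≤ (p : Λ) ∧ ¬ c ≤ (p : Λ) := by
  obtain ⟨m, hbm, hm⟩ := hc.exists_maximal_not_ge hcb
  exact ⟨⟨m, isPrimeElem_of_maximal_not_ge hm⟩, hbm, hm.1⟩

theorem U_top : U (⊤ : Λ) = Set.univ :=
  Set.eq_univ_of_forall fun p => by simpa [U] using p.2.1

theorem U_inf (a b : Λ) : U (a ⊓ b) = U a ∩ U b := by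
  ext p
  simp only [U, Set.mem_ofPred_eq, Set.mem_inter_iff]
  constructor
  · intro h
    exact ⟨fun ha => h (inf_le_left.trans ha), fun hb => h (inf_le_right.trans hb)⟩
  · rintro ⟨ha, hb⟩ hab
    exact (p.2.2 a b hab).elim ha hb

theorem U_sSup (S : Set Λ) : U (sSup S) = ⋃ a ∈ S, U a := by
  ext p
  simp [U]

theorem U_iSup {ι : Sort*} (f : ι → Λ) : U (⨆ i, f i) = ⋃ i, U (f i) := by
  ext p
  simp [U]

theorem U_mono {a b : Λ} (h : a ≤ b) : U a ⊆ U b := fun _ hp hb => hp (h.trans hb)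

theorem isOpen_U (a : Λ) : IsOpen (U a) :=
  TopologicalSpace.isOpen_generateFrom_of_mem ⟨a, rfl⟩

theorem isOpen_iff_exists_eq_U {s : Set (Sp Λ)} : IsOpen s ↔ ∃ a : Λ, s = U a := by
  refine ⟨fun h => ?_, fun ⟨a, hs⟩ => hs ▸ isOpen_U a⟩
  induction h with
  | basic t ht => exact ht.imp fun a ha => ha.symm
  | univ => exact ⟨⊤, U_top.symm⟩
  | inter t₁ t₂ _ _ ih₁ ih₂ =>
    obtain ⟨a, rfl⟩ := ih₁
    obtain ⟨b, rfl⟩ := ih₂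
    exact ⟨a ⊓ b, (U_inf a b).symm⟩
  | sUnion S _ ih =>
    choose a ha using ih
    refine ⟨⨆ t : S, a t t.2, ?_⟩
    rw [U_iSup, Set.sUnion_eq_iUnion]
    exact Set.iUnion_congr fun t => ha t t.2

theorem IsCompactElement.le_of_U_subset {c b : Λ} (hc : IsCompactElement c) (h : U c ⊆ U b) :
    c ≤ b := by
  by_contra hcb
  obtain ⟨p, hbp, hcp⟩ := hc.exists_prime_ge_not_ge hcb
  exact h hcp hbp

theorem IsCompactElement.isCompact_U {c : Λ} (hc : IsCompactElement c) : IsCompact (U c) := by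
  refine isCompact_of_finite_subcover fun V hV hcover => ?_
  choose a ha using fun i => isOpen_iff_exists_eq_U.mp (hV i)
  simp_rw [ha]
  have hc_le : c ≤ ⨆ i, a i := hc.le_of_U_subset (by rwa [U_iSup, ← Set.iUnion_congr ha])
  obtain ⟨t, hct⟩ := IsCompactElement.exists_finset_of_le_iSup Λ hc a hc_le
  refine ⟨t, (U_mono hct).trans ?_⟩
  simp only [U_iSup, subset_refl]

theorem exists_isCompactElement_eq_U_of_isCompact [IsCompactlyGenerated Λ] {a : Λ}
    (ha : IsCompact (U a)) : ∃ c : Λ, IsCompactElement c ∧ U a = U c := by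
  set K := {d : Λ | IsCompactElement d ∧ d ≤ a}
  have hcover : U a ⊆ ⋃ d ∈ K, U d := by rw [← U_sSup, sSup_compact_le_eq]
  obtain ⟨F, hFK, hF, hsub⟩ := ha.elim_finite_subcover_image (fun d _ => isOpen_U d) hcover
  have hFK' : ∀ d ∈ hF.toFinset, d ∈ K := fun d hd => hFK (hF.mem_toFinset.mp hd)
  refine ⟨hF.toFinset.sup id, isCompactElement_finsetSup _ fun d hd => (hFK' d hd).1,
    (hsub.trans ?_).antisymm (U_mono (Finset.sup_le fun d hd => (hFK' d hd).2))⟩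
  exact Set.iUnion₂_subset fun d hd => U_mono (Finset.le_sup (f := id) (hF.mem_toFinset.mpr hd))

end Spectrum

theorem stmt13_general {Λ : Type*} [Order.Frame Λ] [IsCompactlyGenerated Λ]
    (htop : IsCompactElement (⊤ : Λ)) :
    (∀ s : Set (Sp Λ),
        (IsCompact s ∧ IsOpen s) ↔ ∃ c : Λ, IsCompactElement c ∧ s = U c) ∧
    CompactSpace (Sp Λ) := by
  refine ⟨fun s => ⟨?_, ?_⟩, ⟨U_top (Λ := Λ) ▸ htop.isCompact_U⟩⟩
  · rintro ⟨hs, hopen⟩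
    obtain ⟨a, rfl⟩ := isOpen_iff_exists_eq_U.mp hopen
    exact exists_isCompactElement_eq_U_of_isCompact hs
  · rintro ⟨c, hc, rfl⟩
    exact ⟨hc.isCompact_U, isOpen_U c⟩

theorem stmt13 {Λ : Type*} [Order.Frame Λ] [IsCompactlyGenerated Λ]
    (htop : IsCompactElement (⊤ : Λ))
    (hinf : ∀ a b : Λ, IsCompactElement a → IsCompactElement b → IsCompactElement (a ⊓ b)) :
    (∀ s : Set (Sp Λ),
        (IsCompact s ∧ IsOpen s) ↔ ∃ c : Λ, IsCompactElement c ∧ s = U c) ∧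
    CompactSpace (Sp Λ) :=
  stmt13_general htop
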